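/- If G ∈ 𝓕 has order n, then there exists a double Roman dominating function f of G with weight ω(f) ≤ 12n/11; in particular γ_dR(G) ≤ 12n/11. -/

import Mathlib

/-- A double Roman dominating function on a simple graph `G`:
values in `{0,1,2,3}`, every vertex with value `0` has two neighbors with value `2`
or one neighbor with value `3`, and every vertex with value `1` has a neighbor with
value at least `2`. -/
def IsDRDF {V : Type*} (G : SimpleGraph V) (f : V → ℕ) : Prop :=
  (∀ v, f v ≤ 3) ∧
  (∀ v, f v = 0 →
    (∃ u w, u ≠ w ∧ G.Adj v u ∧ G.Adj v w ∧ f u = 2 ∧ f w = 2) ∨ ∃ u, G.Adj v u ∧ f u = 3) ∧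
  (∀ v, f v = 1 → ∃ u, G.Adj v u ∧ 2 ≤ f u)

/-- The double Roman domination number: the minimum weight of a DRDF. -/
noncomputable def gammaDR {V : Type*} [Fintype V] (G : SimpleGraph V) : ℕ :=
  sInf {w | ∃ f, IsDRDF G f ∧ ∑ v, f v = w}

/-- Lift a family of relations to a relation on the sigma type (relating only elements
with the same index). -/
def sigmaRel {ι : Type} {α : ι → Type} (R : ∀ i, α i → α i → Prop) :
    (Σ i, α i) → (Σ i, α i) → Prop :=
  fun a b => ∃ h : a.1 = b.1, R b.1 (h ▸ a.2) b.2

/-- Base relation for the subdivision of a loopless multigraph with vertex type `V`,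
edge type `E` and endpoint maps `e₁ e₂ : E → V`, where the edge `e` is subdivided
`cnt e` times (i.e. replaced by a path through `cnt e` new internal vertices). -/
def subdivR {V E : Type} (e₁ e₂ : E → V) (cnt : E → ℕ) :
    (V ⊕ Σ e : E, Fin (cnt e)) → (V ⊕ Σ e : E, Fin (cnt e)) → Prop
  | .inl v, .inr ⟨e, i⟩ => (v = e₁ e ∧ i.val = 0) ∨ (v = e₂ e ∧ i.val + 1 = cnt e)
  | .inr a, .inr b => sigmaRel (fun _ i j => i.val + 1 = j.val) a b
  | _, _ => False

/-- The simple graph obtained from a loopless multigraph (vertex type `V`, edge type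
`E`, endpoints `e₁ e, e₂ e`) by subdividing each edge `e` exactly `cnt e` times. -/
def subdivG {V E : Type} (e₁ e₂ : E → V) (cnt : E → ℕ) :
    SimpleGraph (V ⊕ Σ e : E, Fin (cnt e)) :=
  SimpleGraph.fromRel (subdivR e₁ e₂ cnt)

/-! Compare two labelings. Put `2` on every branch vertex and `2, 0, 2, 0, …` along each
subdivided edge, or put `3` on every branch vertex and a `3` on every third internal vertex. If
`A` and `B` are their total weights on internal vertices, `m` the number of branch vertices, `k`
the number of edges and `C` the number of internal vertices, then each edge with `c` internal
vertices contributes at most `12 c - 12` to `3 A + 8 B`, so `3 A + 8 B ≤ 12 C - 12 k`, and the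
handshake lemma with minimum degree `3` gives `3 m ≤ 2 k`. Hence
`11 · min (2 m + A) (3 m + B) ≤ 3 (2 m + A) + 8 (3 m + B) ≤ 12 (m + C)`. -/

open Finset

lemma gammaDR_le_of_isDRDF {V : Type*} [Fintype V] {G : SimpleGraph V} {f : V → ℕ}
    (hf : IsDRDF G f) : gammaDR G ≤ ∑ v, f v :=
  Nat.sInf_le ⟨f, hf, rfl⟩

/-- The double Roman condition at a vertex of value `x` with two neighbours of values `l`, `r`. -/
def IsDRDFTriple (l x r : ℕ) : Prop :=
  x ≤ 3 ∧ (x = 0 → l = 3 ∨ r = 3 ∨ l = 2 ∧ r = 2) ∧ (x = 1 → 2 ≤ l ∨ 2 ≤ r)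

lemma isDRDF_of_forall_isDRDFTriple {V : Type*} {G : SimpleGraph V} {f : V → ℕ}
    (h : ∀ v, (2 ≤ f v ∧ f v ≤ 3) ∨
      ∃ u w, u ≠ w ∧ G.Adj v u ∧ G.Adj v w ∧ IsDRDFTriple (f u) (f v) (f w)) :
    IsDRDF G f := by
  refine ⟨fun v => ?_, fun v h0 => ?_, fun v h1 => ?_⟩ <;>
    obtain ⟨hv₂, hv⟩ | ⟨u, w, huw, hu, hw, hle, hzero, hone⟩ := h v
  · exact hv
  · exact hle
  · omega
  · rcases hzero h0 with h3 | h3 | ⟨h2, h2'⟩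
    · exact .inr ⟨u, hu, h3⟩
    · exact .inr ⟨w, hw, h3⟩
    · exact .inl ⟨u, w, huw, hu, hw, h2, h2'⟩
  · omega
  · rcases hone h1 with h2 | h2
    · exact ⟨u, hu, h2⟩
    · exact ⟨w, hw, h2⟩

lemma sum_ncard_incident_eq {V E : Type} [Fintype V] [Fintype E] (e₁ e₂ : E → V)
    (hloop : ∀ e, e₁ e ≠ e₂ e) :
    ∑ v, {e | e₁ e = v ∨ e₂ e = v}.ncard = 2 * Fintype.card E := by
  classical
  have hends (e : E) : #{v | e₁ e = v ∨ e₂ e = v} = 2 := by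
    rw [show ({v | e₁ e = v ∨ e₂ e = v} : Finset V) = {e₁ e, e₂ e} by ext; simp [eq_comm],
      card_pair (hloop e)]
  simp_rw [Set.ncard_eq_toFinset_card', Set.toFinset_ofPred, card_filter]
  rw [sum_comm]
  simp_rw [← card_filter, hends, sum_const, card_univ, smul_eq_mul, mul_comm]

lemma three_mul_card_le_two_mul_card {V E : Type} [Fintype V] [Fintype E] (e₁ e₂ : E → V)
    (hloop : ∀ e, e₁ e ≠ e₂ e) (hdeg : ∀ v : V, 3 ≤ {e | e₁ e = v ∨ e₂ e = v}.ncard) :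
    3 * Fintype.card V ≤ 2 * Fintype.card E :=
  calc 3 * Fintype.card V = ∑ _v : V, 3 := by simp [mul_comm]
    _ ≤ ∑ v, {e | e₁ e = v ∨ e₂ e = v}.ncard := sum_le_sum fun v _ => hdeg v
    _ = 2 * Fintype.card E := sum_ncard_incident_eq e₁ e₂ hloop

section Subdivision

variable {V E : Type} (e₁ e₂ : E → V) (cnt : E → ℕ)

/-- The path replacing `e`: position `0` is `e₁ e`, positions `1, …, cnt e` are the internal
vertices and position `cnt e + 1` is `e₂ e`. -/
def subdivPathVertex (e : E) (j : ℕ) : V ⊕ Σ e : E, Fin (cnt e) :=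
  if h₀ : j = 0 then .inl (e₁ e)
  else if h : j ≤ cnt e then .inr ⟨e, ⟨j - 1, by omega⟩⟩ else .inl (e₂ e)

lemma subdivPathVertex_succ (e : E) (i : Fin (cnt e)) :
    subdivPathVertex e₁ e₂ cnt e (i.val + 1) = .inr ⟨e, i⟩ := by
  simp [subdivPathVertex, Nat.succ_le_of_lt i.isLt]

lemma subdivG_adj_subdivPathVertex_succ {e : E} {j : ℕ} (hc : 0 < cnt e) (hj : j ≤ cnt e) :
    (subdivG e₁ e₂ cnt).Adj (subdivPathVertex e₁ e₂ cnt e j)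
      (subdivPathVertex e₁ e₂ cnt e (j + 1)) := by
  simp only [subdivG, SimpleGraph.fromRel_adj, subdivPathVertex]
  split_ifs <;> simp_all [subdivR, sigmaRel] <;> omega

lemma subdivPathVertex_ne_add_two (hloop : ∀ e, e₁ e ≠ e₂ e) {e : E} {j : ℕ}
    (hj : j < cnt e) : subdivPathVertex e₁ e₂ cnt e j ≠ subdivPathVertex e₁ e₂ cnt e (j + 2) := by
  simp only [subdivPathVertex]
  split_ifs <;> simp_all
  omega

def subdivLabel (a : ℕ) (s : ℕ → ℕ → ℕ) : (V ⊕ Σ e : E, Fin (cnt e)) → ℕ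
  | .inl _ => a
  | .inr ⟨e, i⟩ => s (cnt e) (i.val + 1)

lemma subdivLabel_subdivPathVertex {a : ℕ} {s : ℕ → ℕ → ℕ}
    (hend : ∀ c, s c 0 = a ∧ s c (c + 1) = a) (e : E) {j : ℕ} (hj : j ≤ cnt e + 1) :
    subdivLabel cnt a s (subdivPathVertex e₁ e₂ cnt e j) = s (cnt e) j := by
  simp only [subdivPathVertex]
  split_ifs with h₀ h
  · simp [subdivLabel, h₀, hend]
  · simp [subdivLabel, Nat.sub_add_cancel (Nat.pos_of_ne_zero h₀)]
  · simp [subdivLabel, show j = cnt e + 1 by omega, hend]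

lemma isDRDF_subdivLabel (hloop : ∀ e, e₁ e ≠ e₂ e) {a : ℕ} (ha : 2 ≤ a ∧ a ≤ 3)
    {s : ℕ → ℕ → ℕ} (hend : ∀ c, s c 0 = a ∧ s c (c + 1) = a)
    (hs : ∀ c j, j < c → IsDRDFTriple (s c j) (s c (j + 1)) (s c (j + 2))) :
    IsDRDF (subdivG e₁ e₂ cnt) (subdivLabel cnt a s) := by
  refine isDRDF_of_forall_isDRDFTriple fun
    | .inl _ => .inl ha
    | .inr ⟨e, i⟩ => .inr ?_
  have hc : 0 < cnt e := i.pos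
  rw [← subdivPathVertex_succ e₁ e₂ cnt e i]
  refine ⟨_, _, subdivPathVertex_ne_add_two e₁ e₂ cnt hloop i.isLt,
    (subdivG_adj_subdivPathVertex_succ e₁ e₂ cnt hc i.isLt.le).symm,
    subdivG_adj_subdivPathVertex_succ e₁ e₂ cnt hc i.isLt, ?_⟩
  simp only [subdivLabel_subdivPathVertex e₁ e₂ cnt hend e (j := i.val + 1) (by omega),
    subdivLabel_subdivPathVertex e₁ e₂ cnt hend e (j := i.val) (by omega),
    subdivLabel_subdivPathVertex e₁ e₂ cnt hend e (j := i.val + 2) (by omega)]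
  exact hs _ _ i.isLt

lemma sum_subdivLabel [Fintype V] [Fintype E] (a : ℕ) (s : ℕ → ℕ → ℕ) :
    ∑ x, subdivLabel (V := V) cnt a s x
      = a * Fintype.card V + ∑ e, ∑ i ∈ range (cnt e), s (cnt e) (i + 1) := by
  rw [Fintype.sum_sum_type, Fintype.sum_sigma]
  congr 1
  · simp [subdivLabel, mul_comm]
  · exact sum_congr rfl fun e _ => Fin.sum_univ_eq_sum_range (fun i => s (cnt e) (i + 1)) _

end Subdivision

def twoPattern (c j : ℕ) : ℕ := if j % 2 = 0 ∨ j = c + 1 then 2 else 0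

/-- Position `c` is dominated by the end `c + 1`, so when `3 ∣ c` the `3` it would carry is
replaced by a `2` at `c - 1`. -/
def threePattern (c j : ℕ) : ℕ :=
  if j = 0 ∨ j = c + 1 ∨ (j % 3 = 0 ∧ j ≠ c) then 3
  else if j + 1 = c ∧ c % 3 = 0 then 2 else 0

lemma isDRDFTriple_twoPattern (c j : ℕ) :
    IsDRDFTriple (twoPattern c j) (twoPattern c (j + 1)) (twoPattern c (j + 2)) := by
  unfold IsDRDFTriple twoPattern
  split_ifs <;> norm_num <;> omega

lemma isDRDFTriple_threePattern {c j : ℕ} (hj : j < c) :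
    IsDRDFTriple (threePattern c j) (threePattern c (j + 1)) (threePattern c (j + 2)) := by
  unfold IsDRDFTriple threePattern
  split_ifs <;> norm_num <;> omega

lemma sum_twoPattern (c : ℕ) : ∑ i ∈ range c, twoPattern c (i + 1) = 2 * (c / 2) := by
  suffices ∀ n ≤ c, ∑ i ∈ range n, twoPattern c (i + 1) = 2 * (n / 2) from this c le_rfl
  intro n
  induction n with
  | zero => simp
  | succ n ih =>
    intro hn
    rw [sum_range_succ, ih (by omega), twoPattern]
    split_ifs <;> omega

lemma sum_threePattern {c : ℕ} (hc : 0 < c) :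
    ∑ i ∈ range c, threePattern c (i + 1) + (if c % 3 = 0 then 1 else 0) = 3 * (c / 3) := by
  have hinit : ∀ n, n + 2 ≤ c → ∑ i ∈ range n, threePattern c (i + 1) = 3 * (n / 3) := by
    intro n
    induction n with
    | zero => simp
    | succ n ih =>
      intro hn
      rw [sum_range_succ, ih (by omega), threePattern]
      split_ifs <;> norm_num at * <;> omega
  obtain ⟨n, rfl⟩ | rfl : (∃ n, c = n + 2) ∨ c = 1 := by
    rcases c with _ | _ | n <;> simp_all
  · rw [sum_range_succ, sum_range_succ, hinit n le_rfl]
    simp only [threePattern]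
    split_ifs <;> norm_num at * <;> omega
  · decide

lemma twelve_add_sum_patterns_le {c : ℕ} (hc : 0 < c) :
    12 + 3 * ∑ i ∈ range c, twoPattern c (i + 1) + 8 * ∑ i ∈ range c, threePattern c (i + 1)
      ≤ 12 * c := by
  have h2 := sum_twoPattern c
  have h3 := sum_threePattern hc
  split_ifs at h3 <;> omega

lemma exists_isDRDF_subdivG_eleven_mul_le {V E : Type} [Fintype V] [Fintype E]
    (e₁ e₂ : E → V) (cnt : E → ℕ) (hloop : ∀ e, e₁ e ≠ e₂ e) (hcnt : ∀ e, 0 < cnt e)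
    (hdeg : ∀ v : V, 3 ≤ {e | e₁ e = v ∨ e₂ e = v}.ncard) :
    ∃ f, IsDRDF (subdivG e₁ e₂ cnt) f ∧
      11 * ∑ x, f x ≤ 12 * Fintype.card (V ⊕ Σ e : E, Fin (cnt e)) := by
  have hcard : Fintype.card (V ⊕ Σ e : E, Fin (cnt e)) = Fintype.card V + ∑ e, cnt e := by
    simp [Fintype.card_sigma]
  have hedges := sum_le_sum fun e (_ : e ∈ univ) => twelve_add_sum_patterns_le (hcnt e)
  simp only [sum_add_distrib, ← mul_sum, sum_const, card_univ, smul_eq_mul] at hedges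
  have hm := three_mul_card_le_two_mul_card e₁ e₂ hloop hdeg
  have h₂ := sum_subdivLabel (V := V) cnt 2 twoPattern
  have h₃ := sum_subdivLabel (V := V) cnt 3 threePattern
  by_cases hle : 11 * (2 * Fintype.card V + ∑ e, ∑ i ∈ range (cnt e), twoPattern (cnt e) (i + 1))
      ≤ 12 * Fintype.card (V ⊕ Σ e : E, Fin (cnt e))
  · exact ⟨_, isDRDF_subdivLabel e₁ e₂ cnt hloop (a := 2) (s := twoPattern) (by norm_num)
      (fun _ => ⟨rfl, by simp [twoPattern]⟩) (fun c j _ => isDRDFTriple_twoPattern c j), h₂ ▸ hle⟩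
  · refine ⟨_, isDRDF_subdivLabel e₁ e₂ cnt hloop (a := 3) (s := threePattern) (by norm_num)
      (fun _ => ⟨rfl, by simp [threePattern]⟩) (fun _ _ hj => isDRDFTriple_threePattern hj), ?_⟩
    omega

theorem gammaDR_of_mem_F_general {V E : Type} [Fintype V] [Fintype E]
    (e₁ e₂ : E → V) (cnt : E → ℕ)
    (hloop : ∀ e, e₁ e ≠ e₂ e)
    (hcnt : ∀ e, 1 ≤ cnt e ∧ cnt e ≤ 10)
    (hdeg : ∀ v : V, 3 ≤ {e | e₁ e = v ∨ e₂ e = v}.ncard) :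
    (∃ f, IsDRDF (subdivG e₁ e₂ cnt) f ∧
        ((∑ v, f v : ℕ) : ℚ) ≤ 12 * (Fintype.card (V ⊕ Σ e : E, Fin (cnt e))) / 11) ∧
      (gammaDR (subdivG e₁ e₂ cnt) : ℚ) ≤
        12 * (Fintype.card (V ⊕ Σ e : E, Fin (cnt e))) / 11 := by
  obtain ⟨f, hf, hweight⟩ :=
    exists_isDRDF_subdivG_eleven_mul_le e₁ e₂ cnt hloop (fun e => (hcnt e).1) hdeg
  have hweight' : ((∑ v, f v : ℕ) : ℚ) ≤ 12 * (Fintype.card (V ⊕ Σ e : E, Fin (cnt e))) / 11 := by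
    rw [le_div_iff₀ (by norm_num)]
    exact_mod_cast (mul_comm _ 11).trans_le hweight
  exact ⟨⟨f, hf, hweight'⟩, le_trans (by exact_mod_cast gammaDR_le_of_isDRDF hf) hweight'⟩

/-- If `G ∈ 𝓕`, i.e. `G` is obtained from a connected loopless multigraph with minimum
degree at least `3` by subdividing every edge at least once and at most ten times,
then there exists a DRDF `f` of `G` with `ω(f) ≤ 12n/11`; in particular
`γ_dR(G) ≤ 12n/11`. -/
theorem gammaDR_of_mem_F {V E : Type} [Fintype V] [Fintype E]
    (e₁ e₂ : E → V) (cnt : E → ℕ)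
    (hloop : ∀ e, e₁ e ≠ e₂ e)
    (hcnt : ∀ e, 1 ≤ cnt e ∧ cnt e ≤ 10)
    (hdeg : ∀ v : V, 3 ≤ {e | e₁ e = v ∨ e₂ e = v}.ncard)
    (hconn : (subdivG e₁ e₂ cnt).Connected) :
    (∃ f, IsDRDF (subdivG e₁ e₂ cnt) f ∧
        ((∑ v, f v : ℕ) : ℚ) ≤ 12 * (Fintype.card (V ⊕ Σ e : E, Fin (cnt e))) / 11) ∧
      (gammaDR (subdivG e₁ e₂ cnt) : ℚ) ≤
        12 * (Fintype.card (V ⊕ Σ e : E, Fin (cnt e))) / 11 :=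
  gammaDR_of_mem_F_general e₁ e₂ cnt hloop hcnt hdeg
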